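/- Let α ≥ 1 and R(x,y) = (x⁴−y⁴)^α(x⁴+y⁴)(x⁸−34x⁴y⁴+y⁸) over the rationals. If the coefficient of (x⁴)^{α+3−i}(−y⁴)^i in R vanishes for some i with 0 ≤ i ≤ (α+3)/2, then α = 2i − 3. -/

import Mathlib

/-!
Dehomogenizing at `y = 1` and substituting `t = x⁴` turns `R` into
`q(t) = (t - 1)^α (t³ - 33t² - 33t + 1)`, so with `k = α - i` the coefficient in question is,
up to sign, `C(α,k) + 33 C(α,k+1) - 33 C(α,k+2) - C(α,k+3)`.
As `2i ≤ α + 3`, the indices lie past the middle of row `α` of Pascal's triangle, where binomial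
coefficients decrease: `C(α,k+2) ≤ C(α,k+1)` and `C(α,k+3) ≤ C(α,k)`, the latter strictly unless
`k + (k + 3) = α`, i.e. `α = 2i - 3`.
-/

open MvPolynomial

noncomputable abbrev Rpoly (α : ℕ) : MvPolynomial (Fin 2) ℚ :=
  ((X 0)^4 - (X 1)^4)^α * ((X 0)^4 + (X 1)^4)
    * ((X 0)^8 - 34 * (X 0)^4 * (X 1)^4 + (X 1)^8)

namespace Nat

theorem choose_succ_le_of_le_two_mul_add_one {n k : ℕ} (h : n ≤ 2 * k + 1) :
    n.choose (k + 1) ≤ n.choose k := by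
  refine Nat.le_of_mul_le_mul_right ?_ k.succ_pos
  rw [choose_succ_right_eq]
  exact Nat.mul_le_mul_left _ (by omega)

theorem choose_succ_lt_of_le_two_mul {n k : ℕ} (hk : k < n) (h : n ≤ 2 * k) :
    n.choose (k + 1) < n.choose k := by
  refine Nat.lt_of_mul_lt_mul_right (a := k + 1) ?_
  rw [choose_succ_right_eq]
  exact Nat.mul_lt_mul_of_pos_left (by omega) (choose_pos hk.le)

theorem choose_le_choose_of_le_of_le_two_mul_add_one {n a b : ℕ} (hab : a ≤ b)
    (ha : n ≤ 2 * a + 1) : n.choose b ≤ n.choose a := by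
  induction b, hab using Nat.le_induction with
  | base => exact le_rfl
  | succ b hab ih => exact (choose_succ_le_of_le_two_mul_add_one (by omega)).trans ih

theorem choose_le_choose_of_le_of_le_add {n a b : ℕ} (hab : a ≤ b) (h : n ≤ a + b) :
    n.choose b ≤ n.choose a := by
  rcases le_or_gt n (2 * a + 1) with ha | ha
  · exact choose_le_choose_of_le_of_le_two_mul_add_one hab ha
  · rw [← choose_symm (show a ≤ n by omega)]
    exact choose_le_choose_of_le_of_le_two_mul_add_one (by omega) (by omega)

theorem choose_lt_choose_of_lt_of_lt_add {n a b : ℕ} (hab : a < b) (ha : a ≤ n)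
    (h : n < a + b) : n.choose b < n.choose a := by
  rcases lt_or_ge n b with hnb | hbn
  · rw [choose_eq_zero_of_lt hnb]
    exact choose_pos ha
  · obtain ⟨c, rfl⟩ : ∃ c, b = c + 1 := ⟨b - 1, by omega⟩
    calc n.choose (c + 1) < n.choose c := choose_succ_lt_of_le_two_mul (by omega) (by omega)
      _ ≤ n.choose a := choose_le_choose_of_le_of_le_add (by omega) (by omega)

end Nat

theorem Polynomial.coeff_X_sub_one_pow {R : Type*} [CommRing R] (n k : ℕ) :
    ((Polynomial.X - 1 : Polynomial R) ^ n).coeff k = (-1) ^ (n + k) * n.choose k := by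
  rw [sub_eq_add_neg, ← Polynomial.C_1, ← Polynomial.C_neg, Polynomial.coeff_X_add_C_pow]
  rcases le_or_gt k n with hk | hk
  · rw [show n + k = n - k + 2 * k by omega, pow_add, pow_mul]
    simp
  · simp [Nat.choose_eq_zero_of_lt hk]

/-- `Rpoly α (x, y) = y ^ (4 * (α + 3)) * rpolyDehom α (x⁴ / y⁴)`; the cubic factor is
`(X + 1) * (X ^ 2 - 34 * X + 1)` multiplied out. -/
noncomputable def rpolyDehom (α : ℕ) : Polynomial ℚ :=
  (Polynomial.X - 1) ^ α * (Polynomial.X ^ 3 - 33 * Polynomial.X ^ 2 - 33 * Polynomial.X + 1)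

theorem isHomogeneous_Rpoly (α : ℕ) : (Rpoly α).IsHomogeneous (4 * (α + 3)) := by
  have hX (j : Fin 2) (n : ℕ) : (X j ^ n : MvPolynomial (Fin 2) ℚ).IsHomogeneous n :=
    isHomogeneous_X_pow j n
  have h34 : (34 : MvPolynomial (Fin 2) ℚ).IsHomogeneous 0 := by
    rw [← map_ofNat C 34]
    exact isHomogeneous_C _ _
  have h := ((((hX 0 4).sub (hX 1 4)).pow α).mul ((hX 0 4).add (hX 1 4))).mul
    (((hX 0 8).sub ((h34.mul (hX 0 4)).mul (hX 1 4))).add (hX 1 8))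
  rwa [show 4 * α + 4 + 8 = 4 * (α + 3) by ring] at h

theorem Rpoly_eq_homogenize (α : ℕ) :
    Rpoly α = (Polynomial.expand ℚ 4 (rpolyDehom α)).homogenize (4 * (α + 3)) := by
  refine (Polynomial.homogenize_eq_of_isHomogeneous (isHomogeneous_Rpoly α) ?_).symm
  simp only [Rpoly, rpolyDehom, map_mul, map_pow, map_sub, map_add, map_one, map_ofNat, aeval_X,
    Matrix.cons_val_zero, Matrix.cons_val_one, one_pow, mul_one, Polynomial.expand_X]
  ring

theorem coeff_Rpoly (α i : ℕ) (hi : i ≤ α + 3) :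
    coeff (Finsupp.single 0 (4 * (α + 3 - i)) + Finsupp.single 1 (4 * i)) (Rpoly α) =
      (rpolyDehom α).coeff (α + 3 - i) := by
  rw [Rpoly_eq_homogenize, Polynomial.coeff_homogenize]
  simp [show 4 * (α + 3 - i) + 4 * i = 4 * (α + 3) by omega]

theorem coeff_rpolyDehom_add_three (α k : ℕ) :
    (rpolyDehom α).coeff (k + 3) = (-1) ^ (α + k) *
      (α.choose k + 33 * α.choose (k + 1) - 33 * α.choose (k + 2) - α.choose (k + 3)) := by
  rw [rpolyDehom]
  set f : Polynomial ℚ := (Polynomial.X - 1) ^ α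
  have h3 : (f * Polynomial.X ^ 3).coeff (k + 3) = f.coeff k := Polynomial.coeff_mul_X_pow f 3 k
  have h2 : (f * Polynomial.X ^ 2).coeff (k + 3) = f.coeff (k + 1) :=
    Polynomial.coeff_mul_X_pow f 2 (k + 1)
  have h1 : (f * Polynomial.X).coeff (k + 3) = f.coeff (k + 2) := Polynomial.coeff_mul_X f (k + 2)
  simp only [mul_add, mul_sub, mul_left_comm f 33, mul_one, Polynomial.coeff_add,
    Polynomial.coeff_sub, Polynomial.coeff_ofNat_mul, h3, h2, h1]
  simp only [f, Polynomial.coeff_X_sub_one_pow, ← add_assoc, pow_succ]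
  ring

theorem stmt_12 (α i : ℕ) (hα : 1 ≤ α) (hi : 2 * i ≤ α + 3)
    (h : MvPolynomial.coeff
      (Finsupp.single (0 : Fin 2) (4 * (α + 3 - i)) + Finsupp.single (1 : Fin 2) (4 * i))
      (Rpoly α) = 0) :
    (α : ℤ) = 2 * (i : ℤ) - 3 := by
  by_contra hne
  obtain ⟨k, hk⟩ : ∃ k, α + 3 - i = k + 3 := ⟨α - i, by omega⟩
  rw [coeff_Rpoly α i (by omega), hk, coeff_rpolyDehom_add_three] at h
  have hchoose :
      α.choose k + 33 * α.choose (k + 1) = 33 * α.choose (k + 2) + α.choose (k + 3) := by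
    have hbracket := (mul_eq_zero.mp h).resolve_left (pow_ne_zero _ (by norm_num))
    exact_mod_cast (by linarith : (α.choose k + 33 * α.choose (k + 1) : ℚ) =
      33 * α.choose (k + 2) + α.choose (k + 3))
  have hlt := Nat.choose_lt_choose_of_lt_of_lt_add (n := α) (a := k) (b := k + 3)
    (by omega) (by omega) (by omega)
  have hle := Nat.choose_le_choose_of_le_of_le_add (n := α) (a := k + 1) (b := k + 2)
    (by omega) (by omega)
  omega
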